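/- arXiv:1810.05921 — 3 statements merged into one kernel-verified Lean document; each statement's English description precedes it below -/
import Mathlib

section
/- Let A₁, …, A₁₄ be i.i.d. ℕ-valued random variables each with Poisson distribution of rate 1919, and let d₁, …, d₁₄ be nonnegative real-valued random variables with ∑ₜ₌₁..₁₄ dₜ ≤ 28800 almost surely. Define b₀ = 0 and bₜ = max(0, bₜ₋₁ + Aₜ + 2400 − 1920 − dₜ) for 1 ≤ t ≤ 14. Then P(b₁₄ ≥ 4210) ≥ 997/1000. -/
open MeasureTheory

/-- A ℕ-valued random variable `S` on a probability space `(Ω, P)` has Poisson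
distribution with rate `lam > 0` if `P(S = n) = exp(-lam) * lam^n / n!` for every `n`. -/
def HasPoissonDistribution {Ω : Type*} [MeasurableSpace Ω] (P : Measure Ω)
    (S : Ω → ℕ) (lam : ℝ) : Prop :=
  ∀ n : ℕ, P {ω | S ω = n} = ENNReal.ofReal (Real.exp (-lam) * lam ^ n / n.factorial)

/-!
Unrolling the Lindley recursion with `max 0 y ≥ y` bounds the final backlog below by the free
walk `∑ₜ (Aₜ + 480 - dₜ) ≥ S + 6720 - 28800`, where `S = ∑ₜ Aₜ` is Poisson with rate
`14 · 1919 = 26866`. So `b₁₄ ≥ 4210` as soon as `S > 26289`, and the Chernoff bound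
`P(S ≤ m) ≤ e^(m - r) (r / m)^m` at `m = 26289`, `r = 26866` is below `3 / 1000`.
-/

open ProbabilityTheory Real Finset
open scoped NNReal Nat

section Poisson

variable {Ω : Type*} [MeasurableSpace Ω] {P : Measure Ω}

lemma HasPoissonDistribution.hasLaw {S : Ω → ℕ} {r : ℝ≥0} (hS : Measurable S)
    (h : HasPoissonDistribution P S r) : HasLaw S (poissonMeasure r) P where
  aemeasurable := hS.aemeasurable
  map_eq := Measure.ext_iff_singleton.mpr fun n => by
    rw [Measure.map_apply hS (measurableSet_singleton n), poissonMeasure_singleton]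
    exact h n

lemma poissonMeasure_zero : poissonMeasure 0 = Measure.dirac 0 :=
  Measure.ext_iff_singleton.mpr fun n => by
    rcases n with _ | n <;> simp [poissonMeasure_singleton]

lemma iIndepFun.hasLaw_sum_poissonMeasure [IsProbabilityMeasure P] {ι : Type*}
    {A : ι → Ω → ℕ} {r : ℝ≥0} (hA : ∀ i, Measurable (A i)) (hindep : iIndepFun A P)
    (hlaw : ∀ i, HasLaw (A i) (poissonMeasure r) P) (s : Finset ι) :
    HasLaw (∑ i ∈ s, A i) (poissonMeasure (#s * r)) P := by
  classical
  induction s using Finset.induction_on with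
  | empty =>
    rw [sum_empty, card_empty, Nat.cast_zero, zero_mul, poissonMeasure_zero]
    exact hasLaw_dirac_of_ae_eq (ae_of_all P fun _ => rfl)
  | insert a s ha ih =>
    rw [sum_insert ha, card_insert_of_notMem ha, Nat.cast_succ, add_one_mul, add_comm _ r]
    exact (hindep.indepFun_finsetSum_of_notMem hA ha).symm.hasLaw_add_poissonMeasure (hlaw a) ih

end Poisson

lemma sum_Iic_poisson_le {r : ℝ} {m : ℕ} (hm : 0 < m) (hmr : m ≤ r) :
    ∑ n ∈ Iic m, exp (-r) * r ^ n / n ! ≤ exp (m - r) * (r / m) ^ m := by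
  have hm' : (0 : ℝ) < m := by exact_mod_cast hm
  have hterm : ∀ n ∈ Iic m,
      exp (-r) * r ^ n / n ! ≤ exp (-r) * (r / m) ^ m * ((m : ℝ) ^ n / n !) := by
    intro n hn
    have hpow : (r / m) ^ n ≤ (r / m) ^ m :=
      pow_le_pow_right₀ ((one_le_div hm').mpr hmr) (mem_Iic.mp hn)
    calc exp (-r) * r ^ n / n ! = exp (-r) * (r / m) ^ n * ((m : ℝ) ^ n / n !) := by
          rw [div_pow]; field_simp
      _ ≤ _ := by gcongr
  calc ∑ n ∈ Iic m, exp (-r) * r ^ n / n !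
      ≤ exp (-r) * (r / m) ^ m * ∑ n ∈ Iic m, (m : ℝ) ^ n / n ! := by
        rw [mul_sum]; exact sum_le_sum hterm
    _ ≤ exp (-r) * (r / m) ^ m * exp m := by
        rw [← Nat.range_succ_eq_Iic]
        exact mul_le_mul_of_nonneg_left (sum_le_exp_of_nonneg hm'.le _) <|
          mul_nonneg (exp_pos _).le (pow_nonneg (div_nonneg (hm'.le.trans hmr) hm'.le) _)
    _ = exp (m - r) * (r / m) ^ m := by
        rw [sub_eq_neg_add, exp_add]; ring

lemma one_sub_ofReal_le_poissonMeasure_Ioi {r : ℝ≥0} {m : ℕ} (hm : 0 < m) (hmr : m ≤ r) :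
    1 - ENNReal.ofReal (exp (m - r) * (r / m) ^ m) ≤ poissonMeasure r (Set.Ioi m) := by
  rw [← Set.compl_Iic, prob_compl_eq_one_sub measurableSet_Iic, ← coe_Iic,
    ← sum_measure_singleton]
  simp_rw [poissonMeasure_singleton]
  rw [← ENNReal.ofReal_sum_of_nonneg fun n _ => by positivity]
  gcongr
  exact sum_Iic_poisson_le hm (by exact_mod_cast hmr)

lemma one_add_mul_exp_neg_le {x : ℝ} (hx0 : 0 ≤ x) (hx1 : x ≤ 1) :
    (1 + x) * exp (-x) ≤ exp (-(x ^ 2 / 2 - x ^ 3 / 3)) := by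
  have htaylor : 1 + x + x ^ 2 / 2 + x ^ 3 / 6 ≤ exp x := by
    have h := sum_le_exp_of_nonneg hx0 4
    norm_num [sum_range_succ, Nat.factorial] at h
    linarith
  have hpos : 0 ≤ 1 - x ^ 2 / 2 + x ^ 3 / 3 := by nlinarith
  calc (1 + x) * exp (-x) ≤ ((1 - x ^ 2 / 2 + x ^ 3 / 3) * exp x) * exp (-x) := by
        gcongr
        nlinarith [mul_le_mul_of_nonneg_left htaylor hpos, pow_nonneg hx0 4, pow_nonneg hx0 5,
          pow_nonneg hx0 6]
    _ = 1 - x ^ 2 / 2 + x ^ 3 / 3 := by rw [mul_assoc, ← exp_add]; simp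
    _ ≤ exp (-(x ^ 2 / 2 - x ^ 3 / 3)) := by linarith [add_one_le_exp (-(x ^ 2 / 2 - x ^ 3 / 3))]

lemma exp_neg_six_le : exp (-6) ≤ 3 / 1000 := by
  have he : (2.7182818283 : ℝ) ^ 6 ≤ exp 1 ^ 6 := by gcongr; exact exp_one_gt_d9.le
  have h6 : exp 6 = exp 1 ^ 6 := by rw [exp_one_pow]; norm_num
  rw [exp_neg, inv_le_comm₀ (by positivity) (by norm_num), h6]
  norm_num at he ⊢
  linarith

lemma exp_sub_mul_div_pow_le_three_thousandths :
    exp (26289 - 26866) * (26866 / 26289 : ℝ) ^ 26289 ≤ 3 / 1000 := by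
  -- `26289 (x² / 2 - x³ / 3) ≈ 6.33`
  set x : ℝ := 577 / 26289
  have hbase : (26866 / 26289 : ℝ) = 1 + x := by norm_num [x]
  have hexp : (26289 - 26866 : ℝ) = (26289 : ℕ) * -x := by norm_num [x]
  calc _ = ((1 + x) * exp (-x)) ^ 26289 := by rw [hbase, hexp, exp_nat_mul, mul_pow, mul_comm]
    _ ≤ exp (-(x ^ 2 / 2 - x ^ 3 / 3)) ^ 26289 := by
        gcongr ?_ ^ _
        exact one_add_mul_exp_neg_le (by norm_num [x]) (by norm_num [x])
    _ ≤ exp (-6) := by rw [← exp_nat_mul]; gcongr; norm_num [x]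
    _ ≤ 3 / 1000 := exp_neg_six_le

lemma sum_le_lindley {n : ℕ} (b : ℕ → ℝ) (x : Fin n → ℝ) (hb0 : 0 ≤ b 0)
    (hb : ∀ t : Fin n, b (t + 1) = max 0 (b t + x t)) : ∑ t, x t ≤ b n := by
  induction n with
  | zero => simpa using hb0
  | succ n ih =>
    have hprefix := ih (fun t => x t.castSucc) fun t => by simpa using hb t.castSucc
    have hlast := hb (Fin.last n)
    rw [Fin.val_last] at hlast
    rw [Fin.sum_univ_castSucc, hlast]
    linarith [le_max_right 0 (b n + x (Fin.last n))]

theorem backlog_attack_high_prob_general {Ω : Type*} [MeasurableSpace Ω] (P : Measure Ω)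
    [IsProbabilityMeasure P]
    (A : Fin 14 → Ω → ℕ) (d : Fin 14 → Ω → ℝ)
    (hAmeas : ∀ i, Measurable (A i))
    (hindep : ProbabilityTheory.iIndepFun A P)
    (hpois : ∀ i, HasPoissonDistribution P (A i) 1919)
    (hdsum : ∀ᵐ ω ∂P, ∑ i, d i ω ≤ 28800)
    (b : ℕ → Ω → ℝ)
    (hb0 : ∀ ω, b 0 ω = 0)
    (hb : ∀ t : Fin 14, ∀ ω,
      b (t + 1) ω = max 0 (b t ω + A t ω + 2400 - 1920 - d t ω)) :
    997 / 1000 ≤ P {ω | 4210 ≤ b 14 ω} := by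
  have hlaw : HasLaw (∑ i, A i) (poissonMeasure 26866) P := by
    have h := iIndepFun.hasLaw_sum_poissonMeasure hAmeas hindep
      (fun i => (hpois i).hasLaw (r := 1919) (hAmeas i)) univ
    norm_num at h
    exact h
  have htail : 997 / 1000 ≤ P {ω | 26289 < ∑ i, A i ω} := by
    have hmeas := hlaw.measure_eq (p := (26289 < ·)) measurableSet_Ioi
    simp only [Finset.sum_apply] at hmeas
    rw [hmeas]
    refine le_trans ?_ (one_sub_ofReal_le_poissonMeasure_Ioi (by norm_num) (by norm_num))
    calc (997 / 1000 : ENNReal) = 1 - ENNReal.ofReal (3 / 1000) := by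
          rw [← ENNReal.ofReal_one, ← ENNReal.ofReal_sub _ (by norm_num),
            ← ENNReal.ofReal_ofNat 997, ← ENNReal.ofReal_ofNat 1000,
            ← ENNReal.ofReal_div_of_pos (by norm_num)]
          norm_num
      _ ≤ _ := by gcongr; push_cast; exact exp_sub_mul_div_pow_le_three_thousandths
  refine htail.trans (measure_mono_ae ?_)
  filter_upwards [hdsum] with ω hdω hAω
  have hA : (26290 : ℝ) ≤ ∑ i, (A i ω : ℝ) := by exact_mod_cast hAω
  have hb14 := sum_le_lindley (b · ω) (fun t => A t ω + 480 - d t ω) (hb0 ω).ge fun t => by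
    rw [hb]; ring_nf
  simp only [sum_sub_distrib, sum_add_distrib, sum_const, card_univ, Fintype.card_fin,
    nsmul_eq_mul, Nat.cast_ofNat] at hb14
  change 4210 ≤ b 14 ω
  linarith

/-- With i.i.d. Poisson(1919) hourly arrivals `A 0, …, A 13`, an attacker dumping
2400 extra alerts per hour, nominal service 1920 alerts/hour, and any (random)
defender allocations `d` summing to at most 28800, the Lindley backlog after
14 hours is at least 4210 with probability at least 997/1000. -/
theorem backlog_attack_high_prob {Ω : Type*} [MeasurableSpace Ω] (P : Measure Ω)
    [IsProbabilityMeasure P]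
    (A : Fin 14 → Ω → ℕ) (d : Fin 14 → Ω → ℝ)
    (hAmeas : ∀ i, Measurable (A i))
    (hindep : ProbabilityTheory.iIndepFun A P)
    (hpois : ∀ i, HasPoissonDistribution P (A i) 1919)
    (hdmeas : ∀ i, Measurable (d i))
    (hd0 : ∀ i ω, 0 ≤ d i ω)
    (hdsum : ∀ᵐ ω ∂P, ∑ i, d i ω ≤ 28800)
    (b : ℕ → Ω → ℝ)
    (hb0 : ∀ ω, b 0 ω = 0)
    (hb : ∀ t : Fin 14, ∀ ω,
      b (t + 1) ω = max 0 (b t ω + A t ω + 2400 - 1920 - d t ω)) :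
    997 / 1000 ≤ P {ω | 4210 ≤ b 14 ω} :=
  backlog_attack_high_prob_general P A d hAmeas hindep hpois hdsum b hb0 hb
end

section
/- Let N ∈ ℕ, let B > 0, let x : {1, …, N} → ℝ satisfy xₜ ≤ B for all t, and let k : {1, …, N} → ℝ be nonnegative. Define Kₜ = ∑ᵢ₌₁..ₜ kᵢ, and define the allocations of policy S1 recursively by D₀ = 0, dₜ = max(0, xₜ + Kₜ − Dₜ₋₁ − B), and Dₜ = Dₜ₋₁ + dₜ. Then Dₜ ≤ Kₜ for every t ∈ {1, …, N}; in particular the total number of additional inspections used by the defender never exceeds the total number of additional alerts sent by the attacker. -/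
/-- Resource-accounting lemma for policy S1: if the unattacked backlog `x t` never
exceeds `B`, the attacker injects nonnegative amounts `k t` (with running total `K t`),
and the defender allocates `d t = max 0 (x t + K t - D (t-1) - B)` (running total `D t`),
then the defender's total allocation never exceeds the attacker's total injection:
`D t ≤ K t` for all `1 ≤ t ≤ N`. -/
theorem S1_resource_bound (N : ℕ) (B : ℝ) (hB : 0 < B)
    (x k : ℕ → ℝ)
    (hx : ∀ t, 1 ≤ t → t ≤ N → x t ≤ B)
    (hk : ∀ t, 1 ≤ t → t ≤ N → 0 ≤ k t)
    (K : ℕ → ℝ) (hK : ∀ t, K t = ∑ i ∈ Finset.Icc 1 t, k i)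
    (D : ℕ → ℝ) (hD0 : D 0 = 0)
    (hD : ∀ t, 1 ≤ t → t ≤ N → D t = D (t - 1) + max 0 (x t + K t - D (t - 1) - B)) :
    ∀ t, 1 ≤ t → t ≤ N → D t ≤ K t := by
  intro t
  induction t with
  | zero => intro h; omega
  | succ n ih =>
    intro _ hn
    have hKstep : K (n + 1) = K n + k (n + 1) := by
      rw [hK, hK, Finset.sum_Icc_succ_top (by omega)]
    have hKle : K n ≤ K (n + 1) := by
      rw [hKstep]
      linarith [hk (n + 1) (by omega) hn]
    have hprev : D n ≤ K n := by
      rcases Nat.eq_zero_or_pos n with h0 | hpos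
      · subst h0
        simp [hD0, hK]
      · exact ih hpos (by omega)
    have := hD (n + 1) (by omega) hn
    simp only [Nat.add_sub_cancel] at this
    rw [this]
    rcases le_or_gt (x (n + 1) + K (n + 1) - D n - B) 0 with h | h
    · rw [max_eq_left h]; linarith
    · rw [max_eq_right h.le]
      linarith [hx (n + 1) (by omega) hn]
end

section
/- Let N ∈ ℕ, let B > 0, let X, Y be reals with Y ≤ X, let x : {1, …, N} → ℝ satisfy xₜ ≤ B for all t, and let k : {1, …, N} → ℝ be nonnegative with ∑ₜ₌₁..N kₜ ≤ Y. Define Kₜ = ∑ᵢ₌₁..ₜ kᵢ, and define the allocations of policy S1 recursively by D₀ = 0, dₜ = max(0, xₜ + Kₜ − Dₜ₋₁ − B), and Dₜ = Dₜ₋₁ + dₜ. Then for every t ∈ {1, …, N} both Dₜ ≤ X (the defender never exceeds its budget X) and xₜ + Kₜ − Dₜ ≤ B (the post-allocation backlog never exceeds B). -/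
/-- Deterministic core of Theorem 1(b): if the attacker's budget `Y` is at most the
defender's budget `X`, the unattacked backlog `x t` never exceeds `B`, and the attacker
injects nonnegative amounts `k t` totalling at most `Y` (running total `K t`), then
policy S1 (allocate `d t = max 0 (x t + K t - D (t-1) - B)`, running total `D t`)
never exceeds the defender's budget (`D t ≤ X`) and keeps the post-allocation backlog
within `B` (`x t + K t - D t ≤ B`) for all `1 ≤ t ≤ N`. -/
theorem S1_budget_and_backlog (N : ℕ) (B X Y : ℝ) (hB : 0 < B) (hYX : Y ≤ X)
    (x k : ℕ → ℝ)
    (hx : ∀ t, 1 ≤ t → t ≤ N → x t ≤ B)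
    (hk : ∀ t, 1 ≤ t → t ≤ N → 0 ≤ k t)
    (hksum : ∑ t ∈ Finset.Icc 1 N, k t ≤ Y)
    (K : ℕ → ℝ) (hK : ∀ t, K t = ∑ i ∈ Finset.Icc 1 t, k i)
    (D : ℕ → ℝ) (hD0 : D 0 = 0)
    (hD : ∀ t, 1 ≤ t → t ≤ N → D t = D (t - 1) + max 0 (x t + K t - D (t - 1) - B)) :
    ∀ t, 1 ≤ t → t ≤ N → D t ≤ X ∧ x t + K t - D t ≤ B := by
  -- key invariant: D t ≤ K t for all t ≤ N
  have hKmono : ∀ s t : ℕ, s ≤ t → t ≤ N → K s ≤ K t := by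
    intro s t hst htN
    rw [hK, hK]
    apply Finset.sum_le_sum_of_subset_of_nonneg
    · exact Finset.Icc_subset_Icc le_rfl hst
    · intro i hi _
      exact hk i (Finset.mem_Icc.mp hi).1 (le_trans (Finset.mem_Icc.mp hi).2 htN)
  have hDK : ∀ t, t ≤ N → D t ≤ K t := by
    intro t
    induction t with
    | zero => intro _; rw [hD0, hK]; simp
    | succ n ih =>
      intro hn
      have hn' : n ≤ N := Nat.le_of_succ_le hn
      have h1 : 1 ≤ n + 1 := Nat.le_add_left 1 n
      rw [hD (n+1) h1 hn]
      simp only [Nat.add_sub_cancel]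
      rcases le_or_gt (x (n+1) + K (n+1) - D n - B) 0 with h | h
      · rw [max_eq_left h]
        simpa using le_trans (ih hn') (hKmono n (n+1) (Nat.le_succ n) hn)
      · rw [max_eq_right (le_of_lt h)]
        have := hx (n+1) h1 hn
        linarith
  intro t ht htN
  constructor
  · calc D t ≤ K t := hDK t htN
      _ ≤ K N := hKmono t N htN le_rfl
      _ ≤ Y := by rw [hK]; exact hksum
      _ ≤ X := hYX
  · rw [hD t ht htN]
    rcases le_or_gt (x t + K t - D (t-1) - B) 0 with h | h
    · rw [max_eq_left h]; linarith
    · rw [max_eq_right (le_of_lt h)]; linarith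
end
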